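/- In the setting of the semidiscrete DG scheme on a partition 0 = x₀ < ⋯ < x_M = 1 with cellwise C² functions ρᵢ, vᵢ, τᵢ, qᵢ on [0,T] × [xᵢ, xᵢ₊₁], γ > 0, μ > 0, W ∈ C¹(ℝ), boundary conditions v₀(t,0) = v_{M−1}(t,1) = 0 and q₀(t,0) = q_{M−1}(t,1) = 0, define the symmetric interior penalty form B_h(u,w)(t) := Σᵢ ∫ ∂ₓuᵢ ∂ₓwᵢ dx − Σ_{j=0}^{M} ( {∂ₓw}ⱼ[u]ⱼ + {∂ₓu}ⱼ[w]ⱼ − (σ/h)[u]ⱼ[w]ⱼ ), where σ ≥ 0, h > 0, and at the boundary nodes [u]₀ := −u₀(t,0), {u}₀ := u₀(t,0), [u]_M := u_{M−1}(t,1), {u}_M := u_{M−1}(t,1). Assume for every t: equations (1), (3), (4) of the energy-consistent DG scheme hold as in the inviscid case, and (2') Σᵢ ∫ ( ρᵢ∂ₜvᵢ + ∂ₓ(ρᵢvᵢ²) − ∂ₓ(ρᵢvᵢ)vᵢ + ρᵢ∂ₓτᵢ − ½ρᵢ∂ₓ(vᵢ²) ) vᵢ dx + μ B_h(v,v)(t)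 = Σⱼ₌₁^{M−1} [τ]ⱼ {ρv}ⱼ. Then the discrete energy satisfies the dissipation equality d/dt Σᵢ ∫ [ W(ρᵢ) + ½ρᵢvᵢ² + (γ/2)qᵢ² ] dx = −μ B_h(v,v)(t) for all t ∈ [0,T]; in particular all energy change is due to the viscous form B_h. -/

import Mathlib

open Set MeasureTheory

/-- Time partial derivative of a function `f t x` of time and one space variable. -/
noncomputable def pt (f : ℝ → ℝ → ℝ) (t x : ℝ) : ℝ := deriv (fun s => f s x) t

/-- Space partial derivative of a function `f t x` of time and one space variable. -/
noncomputable def px (f : ℝ → ℝ → ℝ) (t x : ℝ) : ℝ := deriv (fun y => f t y) x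

/-- Jump of a cellwise function `g i : ℝ → ℝ` at node `j` of the partition
`xp 0 < ⋯ < xp M`, with the boundary conventions `[u]₀ = −u₀(x₀)` and
`[u]_M = u_{M−1}(x_M)`. -/
noncomputable def jmpN (M : ℕ) (xp : ℕ → ℝ) (g : ℕ → ℝ → ℝ) (j : ℕ) : ℝ :=
  if j = 0 then -g 0 (xp 0)
  else if j = M then g (M - 1) (xp M)
  else g (j - 1) (xp j) - g j (xp j)

/-- Average of a cellwise function `g i : ℝ → ℝ` at node `j` of the partition
`xp 0 < ⋯ < xp M`, with the boundary conventions `{u}₀ = u₀(x₀)` and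
`{u}_M = u_{M−1}(x_M)`. -/
noncomputable def avgN (M : ℕ) (xp : ℕ → ℝ) (g : ℕ → ℝ → ℝ) (j : ℕ) : ℝ :=
  if j = 0 then g 0 (xp 0)
  else if j = M then g (M - 1) (xp M)
  else (g (j - 1) (xp j) + g j (xp j)) / 2

/-- The symmetric interior penalty bilinear form `B_h(u,w)(t)` on the partition
`xp 0 < ⋯ < xp M`, with penalty parameter `σ/h`. -/
noncomputable def Bh (M : ℕ) (xp : ℕ → ℝ) (σ h : ℝ)
    (u w : ℕ → ℝ → ℝ → ℝ) (t : ℝ) : ℝ :=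
  (∑ i ∈ Finset.range M, ∫ y in xp i..xp (i + 1), px (u i) t y * px (w i) t y)
  - ∑ j ∈ Finset.range (M + 1),
      (avgN M xp (fun i => px (w i) t) j * jmpN M xp (fun i => u i t) j
        + avgN M xp (fun i => px (u i) t) j * jmpN M xp (fun i => w i t) j
        - (σ / h) * jmpN M xp (fun i => u i t) j * jmpN M xp (fun i => w i t) j)


/-!
Differentiating under the integral sign, the energy rate on a cell is
`∫ W'(ρ) ∂ₜρ + ½ ∂ₜρ v² + ρ v ∂ₜv + γ q ∂ₜq`. Pointwise this is the combination
(1) + (2') − (3) + γ (4) of the tested integrands, up to the exact derivatives `∂ₓ(ρvτ)` and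
`γ ∂ₓ(q ∂ₜρ)`: the transport terms of (2') cancel because `∂ₓ(ρv²) = ∂ₓ(ρv) v + ½ ρ ∂ₓ(v²)`,
and `∂ₓ∂ₜρ = ∂ₜ∂ₓρ`. Integrating these exact derivatives cell by cell leaves
`[f]ⱼ{g}ⱼ + [g]ⱼ{f}ⱼ` at the interior nodes (the boundary terms vanish with `v` and `q`), which are
precisely the numerical fluxes on the right-hand sides of (1)–(4). Only `−μ B_h(v,v)` survives.
-/

section Slices

variable {E : Type*} [NormedAddCommGroup E] [NormedSpace ℝ E] {G : ℝ × ℝ → E} {t y : ℝ}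

lemma DifferentiableAt.hasDerivAt_slice_fst (hG : DifferentiableAt ℝ G (t, y)) :
    HasDerivAt (fun s => G (s, y)) (fderiv ℝ G (t, y) (1, 0)) t :=
  hG.hasFDerivAt.comp_hasDerivAt t ((hasDerivAt_id t).prodMk (hasDerivAt_const t y))

lemma DifferentiableAt.hasDerivAt_slice_snd (hG : DifferentiableAt ℝ G (t, y)) :
    HasDerivAt (fun z => G (t, z)) (fderiv ℝ G (t, y) (0, 1)) y :=
  hG.hasFDerivAt.comp_hasDerivAt y ((hasDerivAt_const y t).prodMk (hasDerivAt_id y))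

end Slices

section PartialDerivatives

variable {F : ℝ → ℝ → ℝ} {n : WithTop ℕ∞}

lemma contDiff_slice_time (hF : ContDiff ℝ n (fun z : ℝ × ℝ => F z.1 z.2)) (y : ℝ) :
    ContDiff ℝ n (fun s => F s y) :=
  hF.comp (contDiff_id.prodMk contDiff_const)

lemma contDiff_slice_space (hF : ContDiff ℝ n (fun z : ℝ × ℝ => F z.1 z.2)) (t : ℝ) :
    ContDiff ℝ n (F t) :=
  hF.comp (contDiff_const.prodMk contDiff_id)

lemma hasDerivAt_pt (hF : ContDiff ℝ 1 (fun z : ℝ × ℝ => F z.1 z.2)) (t y : ℝ) :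
    HasDerivAt (fun s => F s y) (pt F t y) t :=
  ((contDiff_slice_time hF y).differentiable one_ne_zero t).hasDerivAt

lemma hasDerivAt_px (hF : ContDiff ℝ 1 (fun z : ℝ × ℝ => F z.1 z.2)) (t y : ℝ) :
    HasDerivAt (F t) (px F t y) y :=
  ((contDiff_slice_space hF t).differentiable one_ne_zero y).hasDerivAt

lemma continuous_px (hF : ContDiff ℝ 1 (fun z : ℝ × ℝ => F z.1 z.2)) (t : ℝ) :
    Continuous (px F t) :=
  (contDiff_slice_space hF t).continuous_deriv le_rfl

lemma pt_eq_fderiv (hF : ContDiff ℝ 1 (fun z : ℝ × ℝ => F z.1 z.2)) (t y : ℝ) :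
    pt F t y = fderiv ℝ (fun z : ℝ × ℝ => F z.1 z.2) (t, y) (1, 0) :=
  ((hF.differentiable one_ne_zero _).hasDerivAt_slice_fst).deriv

lemma px_eq_fderiv (hF : ContDiff ℝ 1 (fun z : ℝ × ℝ => F z.1 z.2)) (t y : ℝ) :
    px F t y = fderiv ℝ (fun z : ℝ × ℝ => F z.1 z.2) (t, y) (0, 1) :=
  ((hF.differentiable one_ne_zero _).hasDerivAt_slice_snd).deriv

lemma continuous_uncurry_pt (hF : ContDiff ℝ 1 (fun z : ℝ × ℝ => F z.1 z.2)) :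
    Continuous (fun z : ℝ × ℝ => pt F z.1 z.2) := by
  simp only [pt_eq_fderiv hF]
  exact (hF.continuous_fderiv one_ne_zero).clm_apply continuous_const

lemma continuous_pt (hF : ContDiff ℝ 1 (fun z : ℝ × ℝ => F z.1 z.2)) (t : ℝ) :
    Continuous (pt F t) :=
  (continuous_uncurry_pt hF).comp (continuous_const.prodMk continuous_id)

lemma pt_px_eq_fderiv (hF : ContDiff ℝ 2 (fun z : ℝ × ℝ => F z.1 z.2)) (t y : ℝ) :
    pt (px F) t y
      = fderiv ℝ (fderiv ℝ (fun z : ℝ × ℝ => F z.1 z.2)) (t, y) (1, 0) (0, 1) := by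
  have hF' := (hF.fderiv_right (m := 1) le_rfl).differentiable one_ne_zero (t, y)
  simp only [pt, funext fun s => px_eq_fderiv (hF.of_le one_le_two) s y]
  exact ((hF'.hasDerivAt_slice_fst.clm_apply (hasDerivAt_const t _)).congr_deriv (by simp)).deriv

lemma hasDerivAt_pt_px (hF : ContDiff ℝ 2 (fun z : ℝ × ℝ => F z.1 z.2)) (t y : ℝ) :
    HasDerivAt (pt F t) (pt (px F) t y) y := by
  have hF' := (hF.fderiv_right (m := 1) le_rfl).differentiable one_ne_zero (t, y)
  simp only [funext (pt_eq_fderiv (hF.of_le one_le_two) t)]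
  rw [pt_px_eq_fderiv hF, hF.contDiffAt.isSymmSndFDerivAt (by simp)]
  exact (hF'.hasDerivAt_slice_snd.clm_apply (hasDerivAt_const y _)).congr_deriv (by simp)

lemma continuous_pt_px (hF : ContDiff ℝ 2 (fun z : ℝ × ℝ => F z.1 z.2)) (t : ℝ) :
    Continuous (pt (px F) t) := by
  simp only [funext (pt_px_eq_fderiv hF t)]
  exact ((((hF.fderiv_right (m := 1) le_rfl).continuous_fderiv one_ne_zero).comp
    (continuous_const.prodMk continuous_id)).clm_apply continuous_const).clm_apply continuous_const

/-- The `s`-derivative is dominated by its maximum over `[t - 1, t + 1] × [a, b]`. -/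
lemma hasDerivAt_intervalIntegral_pt (hF : ContDiff ℝ 1 (fun z : ℝ × ℝ => F z.1 z.2))
    (a b t : ℝ) : HasDerivAt (fun s => ∫ y in a..b, F s y) (∫ y in a..b, pt F t y) t := by
  obtain ⟨C, hC⟩ := ((isCompact_closedBall t 1).prod isCompact_uIcc)
    |>.exists_bound_of_continuousOn (continuous_uncurry_pt hF).continuousOn
  refine (intervalIntegral.hasDerivAt_integral_of_dominated_loc_of_deriv_le
    (bound := fun _ => C) (Metric.closedBall_mem_nhds t one_pos)
    (.of_forall fun s => (contDiff_slice_space hF s).continuous.aestronglyMeasurable)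
    ((contDiff_slice_space hF t).continuous.intervalIntegrable a b)
    (continuous_pt hF t).aestronglyMeasurable ?_ intervalIntegrable_const
    (.of_forall fun y _ s _ => hasDerivAt_pt hF s y)).2
  exact .of_forall fun y hy s hs => hC (s, y) ⟨hs, uIoc_subset_uIcc hy⟩

lemma px_mul_sq_eq (hF : ContDiff ℝ 1 (fun z : ℝ × ℝ => F z.1 z.2)) {v : ℝ → ℝ → ℝ}
    (hv : ContDiff ℝ 1 (fun z : ℝ × ℝ => v z.1 z.2)) (t y : ℝ) :
    px (fun s z => F s z * (v s z) ^ 2) t y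
      = px (fun s z => F s z * v s z) t y * v t y
        + (1/2) * F t y * px (fun s z => (v s z) ^ 2) t y := by
  have hFx := hasDerivAt_px hF t y
  have hvx := hasDerivAt_px hv t y
  have hFv2 : px (fun s z => F s z * (v s z) ^ 2) t y = _ := (hFx.fun_mul (hvx.fun_pow 2)).deriv
  have hFv : px (fun s z => F s z * v s z) t y = _ := (hFx.fun_mul hvx).deriv
  have hv2 : px (fun s z => (v s z) ^ 2) t y = _ := (hvx.fun_pow 2).deriv
  rw [hFv2, hFv, hv2]
  push_cast
  ring

end PartialDerivatives

lemma sum_range_sub_eq_sum_Ico_sub {α β : Type*} [AddCommGroup β] (F : ℕ → α → β)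
    (xp : ℕ → α) (M : ℕ) :
    ∑ i ∈ Finset.range M, (F i (xp (i + 1)) - F i (xp i))
      = ∑ j ∈ Finset.Ico 1 M, (F (j - 1) (xp j) - F j (xp j))
        + F (M - 1) (xp M) - F 0 (xp 0) := by
  induction M with
  | zero => simp
  | succ n ih =>
    rcases Nat.eq_zero_or_pos n with rfl | hn
    · simp
    rw [Finset.sum_range_succ, ih, Finset.sum_Ico_succ_top hn, Nat.add_sub_cancel]
    abel

theorem sum_integral_deriv_mul_add_mul_deriv {M : ℕ} {xp : ℕ → ℝ}
    {f g f' g' : ℕ → ℝ → ℝ}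
    (hf : ∀ i < M, ∀ y, HasDerivAt (f i) (f' i y) y)
    (hg : ∀ i < M, ∀ y, HasDerivAt (g i) (g' i y) y)
    (hf' : ∀ i < M, Continuous (f' i)) (hg' : ∀ i < M, Continuous (g' i))
    (h0 : f 0 (xp 0) * g 0 (xp 0) = 0) (hM : f (M - 1) (xp M) * g (M - 1) (xp M) = 0) :
    ∑ i ∈ Finset.range M, ∫ y in xp i..xp (i + 1), (f' i y * g i y + f i y * g' i y)
      = ∑ j ∈ Finset.Ico 1 M,
          (f (j - 1) (xp j) - f j (xp j)) * ((g (j - 1) (xp j) + g j (xp j)) / 2)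
        + ∑ j ∈ Finset.Ico 1 M,
          (g (j - 1) (xp j) - g j (xp j)) * ((f (j - 1) (xp j) + f j (xp j)) / 2) := by
  have hcell : ∀ i ∈ Finset.range M,
      ∫ y in xp i..xp (i + 1), (f' i y * g i y + f i y * g' i y)
        = f i (xp (i + 1)) * g i (xp (i + 1)) - f i (xp i) * g i (xp i) := by
    intro i hi
    have hi := Finset.mem_range.1 hi
    have hfc := continuous_iff_continuousAt.2 fun y => (hf i hi y).continuousAt
    have hgc := continuous_iff_continuousAt.2 fun y => (hg i hi y).continuousAt
    exact intervalIntegral.integral_eq_sub_of_hasDerivAt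
      (fun y _ => (hf i hi y).mul (hg i hi y))
      ((((hf' i hi).mul hgc).add (hfc.mul (hg' i hi))).intervalIntegrable _ _)
  rw [Finset.sum_congr rfl hcell, sum_range_sub_eq_sum_Ico_sub (fun i y => f i y * g i y),
    h0, hM, add_zero, sub_zero, ← Finset.sum_add_distrib]
  -- discrete product rule `ab - cd = (a - c) (b + d) / 2 + (b - d) (a + c) / 2`
  exact Finset.sum_congr rfl fun j _ => by ring

section CellEnergy

variable {W : ℝ → ℝ} {ρ v τ q : ℝ → ℝ → ℝ}

lemma hasDerivAt_integral_energy (hW : ContDiff ℝ 1 W)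
    (hρ : ContDiff ℝ 1 (fun z : ℝ × ℝ => ρ z.1 z.2))
    (hv : ContDiff ℝ 1 (fun z : ℝ × ℝ => v z.1 z.2))
    (hq : ContDiff ℝ 1 (fun z : ℝ × ℝ => q z.1 z.2)) (γ a b t : ℝ) :
    HasDerivAt
      (fun s => ∫ y in a..b, (W (ρ s y) + (1/2) * ρ s y * (v s y) ^ 2 + (γ/2) * (q s y) ^ 2))
      (∫ y in a..b, (deriv W (ρ t y) * pt ρ t y + (1/2) * pt ρ t y * (v t y) ^ 2
        + ρ t y * v t y * pt v t y + γ * (q t y * pt q t y))) t := by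
  have hE : ContDiff ℝ 1 (fun z : ℝ × ℝ =>
      W (ρ z.1 z.2) + (1/2) * ρ z.1 z.2 * (v z.1 z.2) ^ 2 + (γ/2) * (q z.1 z.2) ^ 2) := by
    fun_prop
  refine (hasDerivAt_intervalIntegral_pt hE a b t).congr_deriv
    (intervalIntegral.integral_congr fun y _ => HasDerivAt.deriv ?_)
  have hW' := (hW.differentiable one_ne_zero (ρ t y)).hasDerivAt
  have hρt := hasDerivAt_pt hρ t y
  exact (((hW'.comp t hρt).fun_add ((hρt.const_mul (1/2)).fun_mul
    ((hasDerivAt_pt hv t y).fun_pow 2))).fun_add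
      (((hasDerivAt_pt hq t y).fun_pow 2).const_mul (γ/2))).congr_deriv (by push_cast; ring)

lemma integral_energy_rate_eq (hW : ContDiff ℝ 1 W)
    (hρ : ContDiff ℝ 2 (fun z : ℝ × ℝ => ρ z.1 z.2))
    (hv : ContDiff ℝ 1 (fun z : ℝ × ℝ => v z.1 z.2))
    (hτ : ContDiff ℝ 1 (fun z : ℝ × ℝ => τ z.1 z.2))
    (hq : ContDiff ℝ 1 (fun z : ℝ × ℝ => q z.1 z.2)) (γ a b t : ℝ) :
    ∫ y in a..b, (deriv W (ρ t y) * pt ρ t y + (1/2) * pt ρ t y * (v t y) ^ 2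
        + ρ t y * v t y * pt v t y + γ * (q t y * pt q t y))
      = (∫ y in a..b, ((pt ρ t y + px (fun s z => ρ s z * v s z) t y) * τ t y))
        + (∫ y in a..b, ((ρ t y * pt v t y + px (fun s z => ρ s z * (v s z) ^ 2) t y
            - px (fun s z => ρ s z * v s z) t y * v t y + ρ t y * px τ t y
            - (1/2) * ρ t y * px (fun s z => (v s z) ^ 2) t y) * v t y))
        - (∫ y in a..b, ((τ t y - deriv W (ρ t y) + γ * px q t y - (1/2) * (v t y) ^ 2)
            * pt ρ t y))
        + γ * (∫ y in a..b, ((pt q t y - pt (px ρ) t y) * q t y))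
        - (∫ y in a..b, (px (fun s z => ρ s z * v s z) t y * τ t y
            + ρ t y * v t y * px τ t y))
        + γ * (∫ y in a..b, (px q t y * pt ρ t y + q t y * pt (px ρ) t y)) := by
  have hρ1 : ContDiff ℝ 1 (fun z : ℝ × ℝ => ρ z.1 z.2) := hρ.of_le one_le_two
  have cρ := (contDiff_slice_space hρ1 t).continuous
  have cv := (contDiff_slice_space hv t).continuous
  have cτ := (contDiff_slice_space hτ t).continuous
  have cq := (contDiff_slice_space hq t).continuous
  have cρt := continuous_pt hρ1 t
  have cvt := continuous_pt hv t
  have cqt := continuous_pt hq t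
  have cτx := continuous_px hτ t
  have cqx := continuous_px hq t
  have cρxt := continuous_pt_px hρ t
  have cW' := hW.continuous_deriv le_rfl
  have cρvx := continuous_px (F := fun s z => ρ s z * v s z) (hρ1.mul hv) t
  have cρv2x := continuous_px (F := fun s z => ρ s z * (v s z) ^ 2) (hρ1.mul (hv.pow 2)) t
  have cv2x := continuous_px (F := fun s z => (v s z) ^ 2) (hv.pow 2) t
  rw [← intervalIntegral.integral_const_mul, ← intervalIntegral.integral_const_mul,
    ← intervalIntegral.integral_add, ← intervalIntegral.integral_sub,
    ← intervalIntegral.integral_add, ← intervalIntegral.integral_sub,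
    ← intervalIntegral.integral_add]
  · exact intervalIntegral.integral_congr fun y _ => by
      linear_combination (-v t y) * px_mul_sq_eq hρ1 hv t y
  all_goals exact Continuous.intervalIntegrable (by fun_prop) _ _

end CellEnergy

theorem dg_semidiscrete_energy_dissipation_viscous_general
    (M : ℕ) (xp : ℕ → ℝ)
    (hx0 : xp 0 = 0) (hxM : xp M = 1)
    (T γ μ σ h : ℝ)
    (W : ℝ → ℝ) (hW : ContDiff ℝ 1 W)
    (ρ v τ q : ℕ → ℝ → ℝ → ℝ)  -- cell index, time, position
    (hρ : ∀ i < M, ContDiff ℝ 2 (fun z : ℝ × ℝ => ρ i z.1 z.2))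
    (hv : ∀ i < M, ContDiff ℝ 2 (fun z : ℝ × ℝ => v i z.1 z.2))
    (hτ : ∀ i < M, ContDiff ℝ 2 (fun z : ℝ × ℝ => τ i z.1 z.2))
    (hq : ∀ i < M, ContDiff ℝ 2 (fun z : ℝ × ℝ => q i z.1 z.2))
    -- boundary conditions
    (hbv : ∀ t ∈ Icc (0:ℝ) T, v 0 t 0 = 0 ∧ v (M - 1) t 1 = 0)
    (hbq : ∀ t ∈ Icc (0:ℝ) T, q 0 t 0 = 0 ∧ q (M - 1) t 1 = 0)
    -- (1) mass equation tested with τ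
    (h1 : ∀ t ∈ Icc (0:ℝ) T,
      ∑ i ∈ Finset.range M, ∫ y in xp i..xp (i + 1),
          ((pt (ρ i) t y + px (fun s z => ρ i s z * v i s z) t y) * τ i t y)
        = ∑ j ∈ Finset.Ico 1 M,
            (ρ (j - 1) t (xp j) * v (j - 1) t (xp j)
              - ρ j t (xp j) * v j t (xp j))
            * ((τ (j - 1) t (xp j) + τ j t (xp j)) / 2))
    -- (2') momentum equation with interior penalty viscosity, tested with v
    (h2 : ∀ t ∈ Icc (0:ℝ) T,
      (∑ i ∈ Finset.range M, ∫ y in xp i..xp (i + 1),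
          ((ρ i t y * pt (v i) t y
              + px (fun s z => ρ i s z * (v i s z) ^ 2) t y
              - px (fun s z => ρ i s z * v i s z) t y * v i t y
              + ρ i t y * px (τ i) t y
              - (1/2) * ρ i t y * px (fun s z => (v i s z) ^ 2) t y)
            * v i t y))
        + μ * Bh M xp σ h v v t
        = ∑ j ∈ Finset.Ico 1 M,
            (τ (j - 1) t (xp j) - τ j t (xp j))
            * ((ρ (j - 1) t (xp j) * v (j - 1) t (xp j)
                + ρ j t (xp j) * v j t (xp j)) / 2))
    -- (3) chemical-potential equation tested with ∂ₜρ
    (h3 : ∀ t ∈ Icc (0:ℝ) T,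
      ∑ i ∈ Finset.range M, ∫ y in xp i..xp (i + 1),
          ((τ i t y - deriv W (ρ i t y) + γ * px (q i) t y
              - (1/2) * (v i t y) ^ 2) * pt (ρ i) t y)
        = γ * ∑ j ∈ Finset.Ico 1 M,
            (q (j - 1) t (xp j) - q j t (xp j))
            * ((pt (ρ (j - 1)) t (xp j) + pt (ρ j) t (xp j)) / 2))
    -- (4) time-differentiated gradient equation tested with q
    (h4 : ∀ t ∈ Icc (0:ℝ) T,
      ∑ i ∈ Finset.range M, ∫ y in xp i..xp (i + 1),
          ((pt (q i) t y - pt (px (ρ i)) t y) * q i t y)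
        = -∑ j ∈ Finset.Ico 1 M,
            (pt (ρ (j - 1)) t (xp j) - pt (ρ j) t (xp j))
            * ((q (j - 1) t (xp j) + q j t (xp j)) / 2)) :
    ∀ t ∈ Icc (0:ℝ) T,
      HasDerivWithinAt
        (fun s => ∑ i ∈ Finset.range M, ∫ y in xp i..xp (i + 1),
          (W (ρ i s y) + (1/2) * ρ i s y * (v i s y) ^ 2
            + (γ/2) * (q i s y) ^ 2))
        (-(μ * Bh M xp σ h v v t))
        (Icc (0:ℝ) T) t := by
  intro t ht
  have hv1 i (hi : i < M) := (hv i hi).of_le one_le_two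
  have hτ1 i (hi : i < M) := (hτ i hi).of_le one_le_two
  have hq1 i (hi : i < M) := (hq i hi).of_le one_le_two
  have hρv i (hi : i < M) : ContDiff ℝ 1 (fun z : ℝ × ℝ => ρ i z.1 z.2 * v i z.1 z.2) :=
    ((hρ i hi).mul (hv i hi)).of_le one_le_two
  have hE := HasDerivAt.fun_sum (u := Finset.range M) fun i hi =>
    have hi := Finset.mem_range.1 hi
    hasDerivAt_integral_energy hW ((hρ i hi).of_le one_le_two) (hv1 i hi) (hq1 i hi) γ
      (xp i) (xp (i + 1)) t
  have hρvτ := sum_integral_deriv_mul_add_mul_deriv (xp := xp)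
    (f := fun i y => ρ i t y * v i t y)
    (fun i hi y => hasDerivAt_px (F := fun s z => ρ i s z * v i s z) (hρv i hi) t y)
    (fun i hi y => hasDerivAt_px (hτ1 i hi) t y)
    (fun i hi => continuous_px (F := fun s z => ρ i s z * v i s z) (hρv i hi) t)
    (fun i hi => continuous_px (hτ1 i hi) t)
    (by simp [hx0, (hbv t ht).1]) (by simp [hxM, (hbv t ht).2])
  have hqρt := sum_integral_deriv_mul_add_mul_deriv (xp := xp) (f := fun i => q i t)
    (fun i hi y => hasDerivAt_px (hq1 i hi) t y) (fun i hi y => hasDerivAt_pt_px (hρ i hi) t y)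
    (fun i hi => continuous_px (hq1 i hi) t) (fun i hi => continuous_pt_px (hρ i hi) t)
    (by simp [hx0, (hbq t ht).1]) (by simp [hxM, (hbq t ht).2])
  refine (hE.congr_deriv ?_).hasDerivWithinAt
  rw [Finset.sum_congr rfl fun i hi =>
    have hi := Finset.mem_range.1 hi
    integral_energy_rate_eq hW (hρ i hi) (hv1 i hi) (hτ1 i hi) (hq1 i hi) γ
      (xp i) (xp (i + 1)) t]
  simp only [Finset.sum_add_distrib, Finset.sum_sub_distrib, ← Finset.mul_sum]
  linear_combination h1 t ht + h2 t ht - h3 t ht + γ * h4 t ht - hρvτ + γ * hqρt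

/-- Energy dissipation for the spatially semidiscrete DG scheme for the NSK
system (`μ > 0`) with symmetric interior penalty viscous form `B_h`: under the
energy-consistent DG equations (1), (3), (4) and the momentum equation (2')
including `μ B_h(v,v)`, the discrete energy satisfies
`d/dt Σᵢ ∫ (W(ρᵢ) + ½ρᵢvᵢ² + (γ/2)qᵢ²) = −μ B_h(v,v)(t)` on `[0,T]`: all
energy change is due to the viscous form. -/
theorem dg_semidiscrete_energy_dissipation_viscous
    (M : ℕ) (hM : 1 ≤ M) (xp : ℕ → ℝ)
    (hx0 : xp 0 = 0) (hxM : xp M = 1)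
    (hx : ∀ i < M, xp i < xp (i + 1))
    (T γ μ σ h : ℝ) (hT : 0 < T) (hγ : 0 < γ) (hμ : 0 < μ)
    (hσ : 0 ≤ σ) (hh : 0 < h)
    (W : ℝ → ℝ) (hW : ContDiff ℝ 1 W)
    (ρ v τ q : ℕ → ℝ → ℝ → ℝ)  -- cell index, time, position
    (hρ : ∀ i < M, ContDiff ℝ 2 (fun z : ℝ × ℝ => ρ i z.1 z.2))
    (hv : ∀ i < M, ContDiff ℝ 2 (fun z : ℝ × ℝ => v i z.1 z.2))
    (hτ : ∀ i < M, ContDiff ℝ 2 (fun z : ℝ × ℝ => τ i z.1 z.2))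
    (hq : ∀ i < M, ContDiff ℝ 2 (fun z : ℝ × ℝ => q i z.1 z.2))
    -- boundary conditions
    (hbv : ∀ t ∈ Icc (0:ℝ) T, v 0 t 0 = 0 ∧ v (M - 1) t 1 = 0)
    (hbq : ∀ t ∈ Icc (0:ℝ) T, q 0 t 0 = 0 ∧ q (M - 1) t 1 = 0)
    -- (1) mass equation tested with τ
    (h1 : ∀ t ∈ Icc (0:ℝ) T,
      ∑ i ∈ Finset.range M, ∫ y in xp i..xp (i + 1),
          ((pt (ρ i) t y + px (fun s z => ρ i s z * v i s z) t y) * τ i t y)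
        = ∑ j ∈ Finset.Ico 1 M,
            (ρ (j - 1) t (xp j) * v (j - 1) t (xp j)
              - ρ j t (xp j) * v j t (xp j))
            * ((τ (j - 1) t (xp j) + τ j t (xp j)) / 2))
    -- (2') momentum equation with interior penalty viscosity, tested with v
    (h2 : ∀ t ∈ Icc (0:ℝ) T,
      (∑ i ∈ Finset.range M, ∫ y in xp i..xp (i + 1),
          ((ρ i t y * pt (v i) t y
              + px (fun s z => ρ i s z * (v i s z) ^ 2) t y
              - px (fun s z => ρ i s z * v i s z) t y * v i t y
              + ρ i t y * px (τ i) t y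
              - (1/2) * ρ i t y * px (fun s z => (v i s z) ^ 2) t y)
            * v i t y))
        + μ * Bh M xp σ h v v t
        = ∑ j ∈ Finset.Ico 1 M,
            (τ (j - 1) t (xp j) - τ j t (xp j))
            * ((ρ (j - 1) t (xp j) * v (j - 1) t (xp j)
                + ρ j t (xp j) * v j t (xp j)) / 2))
    -- (3) chemical-potential equation tested with ∂ₜρ
    (h3 : ∀ t ∈ Icc (0:ℝ) T,
      ∑ i ∈ Finset.range M, ∫ y in xp i..xp (i + 1),
          ((τ i t y - deriv W (ρ i t y) + γ * px (q i) t y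
              - (1/2) * (v i t y) ^ 2) * pt (ρ i) t y)
        = γ * ∑ j ∈ Finset.Ico 1 M,
            (q (j - 1) t (xp j) - q j t (xp j))
            * ((pt (ρ (j - 1)) t (xp j) + pt (ρ j) t (xp j)) / 2))
    -- (4) time-differentiated gradient equation tested with q
    (h4 : ∀ t ∈ Icc (0:ℝ) T,
      ∑ i ∈ Finset.range M, ∫ y in xp i..xp (i + 1),
          ((pt (q i) t y - pt (px (ρ i)) t y) * q i t y)
        = -∑ j ∈ Finset.Ico 1 M,
            (pt (ρ (j - 1)) t (xp j) - pt (ρ j) t (xp j))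
            * ((q (j - 1) t (xp j) + q j t (xp j)) / 2)) :
    ∀ t ∈ Icc (0:ℝ) T,
      HasDerivWithinAt
        (fun s => ∑ i ∈ Finset.range M, ∫ y in xp i..xp (i + 1),
          (W (ρ i s y) + (1/2) * ρ i s y * (v i s y) ^ 2
            + (γ/2) * (q i s y) ^ 2))
        (-(μ * Bh M xp σ h v v t))
        (Icc (0:ℝ) T) t :=
  dg_semidiscrete_energy_dissipation_viscous_general M xp hx0 hxM T γ μ σ h W hW ρ v τ q hρ hv hτ hq
    hbv hbq h1 h2 h3 h4
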